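/- Let A be a matrix product state on L qubits and 1 ≤ m ≤ L, such that A(s) is in left canonical form for all s < m and in right canonical form for all s > m. For α = 1,…,r(m) let φ^α ∈ (ℂ²)^{⊗(m−1)} have amplitudes ⟨x|φ^α⟩ = A_{x_1}(1) ⋯ A_{x_{m−1}}(m−1) e^α, and for β = 1,…,c(m) let θ^β ∈ (ℂ²)^{⊗(L−m)} have amplitudes ⟨y|θ^β⟩ = (e^β)ᵀ A_{y_1}(m+1) ⋯ A_{y_{L−m}}(L). Set n = min(r(m), 2c(m)) and suppose the r(m) × 2c(m) block matrix [A_0(m) | A_1(m)] has a singular value decomposition U S V† with U of size r(m) × n, S diagonal n × n with nonnegative entries, V of size 2c(m) × n, and U†U = V†V = I_n; write V = [V_0; V_1] with blocks V_0, V_1 of size c(m) × n. Define φ̂^i = Σ_{α=1}^{r(m)} U_{α,i} φ^α and θ̂^i = Σ_{β=1}^{c(m)} ( (V_0*)_{β,i} |0⟩ ⊗ θ^β + (V_1*)_{β,i} |1⟩ ⊗ θ^β ) for i = 1,…,n. Then the families {φ̂^i} and {θ̂^i} are each orthonormal, and under the identification (ℂ²)^{⊗(m−1)} ⊗ (ℂ²)^{⊗(L−m+1)}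 ≅ (ℂ²)^{⊗L} one has ψ(A) = Σ_{i=1}^{n} S_{i,i} · φ̂^i ⊗ θ̂^i. -/
import Mathlib


open Matrix

/-- A matrix product state on a chain of `L` qubits: bond dimensions `D 0, D 1, …, D L`
(so the 1-based site `s` carries matrices of size `r(s) × c(s) = D (s-1) × D s`), with
`D 0 = 1` and `D L = 1`, and matrices `A s x : Matrix (Fin (D s)) (Fin (D (s+1))) ℂ` for the
(0-based) site `s` and physical index `x ∈ {0,1}`. -/
structure MPS (L : ℕ) where
  D : ℕ → ℕ
  A : (s : ℕ) → Fin 2 → Matrix (Fin (D s)) (Fin (D (s + 1))) ℂ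
  D_zero : D 0 = 1
  D_last : D L = 1

/-- Partial product `A_{x_s}(s) A_{x_{s+1}}(s+1) ⋯ A_{x_{s+n-1}}(s+n-1)` (0-based sites). -/
noncomputable def MPS.chunk {L : ℕ} (m : MPS L) (x : ℕ → Fin 2) (s : ℕ) :
    (n : ℕ) → Matrix (Fin (m.D s)) (Fin (m.D (s + n))) ℂ
  | 0 => (1 : Matrix (Fin (m.D s)) (Fin (m.D s)) ℂ)
  | n + 1 => MPS.chunk m x s n * m.A (s + n) (x (s + n))

/-- The product of the first `n` matrices, `A_{x_0}(0) ⋯ A_{x_{n-1}}(n-1)`. -/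
noncomputable def MPS.pref {L : ℕ} (m : MPS L) (x : ℕ → Fin 2) :
    (n : ℕ) → Matrix (Fin (m.D 0)) (Fin (m.D n)) ℂ
  | 0 => 1
  | n + 1 => MPS.pref m x n * m.A n (x n)

/-- Extension of a tuple `x ∈ {0,1}^n` to a function `ℕ → Fin 2` (by zero). -/
def extendTup {n : ℕ} (x : Fin n → Fin 2) : ℕ → Fin 2 :=
  fun k => if h : k < n then x ⟨k, h⟩ else 0

/-- Extension of a tuple `y ∈ {0,1}^n` to a function `ℕ → Fin 2` placing `y` at positions
`m, m+1, …, m+n-1`. -/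
def extendTupFrom (m : ℕ) {n : ℕ} (y : Fin n → Fin 2) : ℕ → Fin 2 :=
  fun k => if h : k - m < n then y ⟨k - m, h⟩ else 0

/-- The state `ψ(A) ∈ (ℂ²)^{⊗L}` of a matrix product state: its amplitudes are the `1 × 1`
matrix products `⟨x|ψ(A)⟩ = A_{x_1}(1) A_{x_2}(2) ⋯ A_{x_L}(L)`. -/
noncomputable def MPS.state {L : ℕ} (m : MPS L) : (Fin L → Fin 2) → ℂ :=
  fun x =>
    m.pref (extendTup x) L ⟨0, by rw [m.D_zero]; exact Nat.one_pos⟩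
      ⟨0, by rw [m.D_last]; exact Nat.one_pos⟩

/-- Left canonical form at (0-based) site `s`: `A_0(s)† A_0(s) + A_1(s)† A_1(s) = I`. -/
def MPS.LCF {L : ℕ} (m : MPS L) (s : ℕ) : Prop :=
  (m.A s 0)ᴴ * m.A s 0 + (m.A s 1)ᴴ * m.A s 1 = 1

/-- Right canonical form at (0-based) site `s`: `A_0(s) A_0(s)† + A_1(s) A_1(s)† = I`. -/
def MPS.RCF {L : ℕ} (m : MPS L) (s : ℕ) : Prop :=
  m.A s 0 * (m.A s 0)ᴴ + m.A s 1 * (m.A s 1)ᴴ = 1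

/-- The state `φ^α ∈ (ℂ²)^{⊗n}` with amplitudes
`⟨x|φ^α⟩ = A_{x_1}(1) ⋯ A_{x_n}(n) e^α` (the first `n` sites, column `α`). -/
noncomputable def MPS.phi {L : ℕ} (m : MPS L) (n : ℕ) (α : Fin (m.D n)) :
    (Fin n → Fin 2) → ℂ :=
  fun x => m.pref (extendTup x) n ⟨0, by rw [m.D_zero]; exact Nat.one_pos⟩ α

/-- The state `θ^β ∈ (ℂ²)^{⊗(L−s)}` with amplitudes
`⟨y|θ^β⟩ = (e^β)ᵀ A_{y_1}(s+1) ⋯ A_{y_{L−s}}(L)` (the last `L − s` sites, row `β`;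
here `s` is 0-based, i.e. sites `s, s+1, …, L-1` in 0-based counting). -/
noncomputable def MPS.theta {L : ℕ} (m : MPS L) (s : ℕ) (hs : s ≤ L) (β : Fin (m.D s)) :
    (Fin (L - s) → Fin 2) → ℂ :=
  fun y =>
    m.chunk (extendTupFrom s y) s (L - s) β
      ⟨0, by rw [Nat.add_sub_cancel' hs, m.D_last]; exact Nat.one_pos⟩

/-- The state `φ̂^i = ∑_α U_{α,i} φ^α`. -/
noncomputable def phiHat (L : ℕ) (A : MPS L) (m : ℕ) (n : ℕ)
    (U : Matrix (Fin (A.D m)) (Fin n) ℂ) (i : Fin n) : (Fin m → Fin 2) → ℂ :=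
  fun x => ∑ α, U α i * A.phi m α x

/-- The state `θ̂^i = ∑_β ((V_0^*)_{β,i} |0⟩ ⊗ θ^β + (V_1^*)_{β,i} |1⟩ ⊗ θ^β)`, where
`V = [V_0; V_1]`, i.e. `V_x = V (x, ·)` for the physical index `x ∈ {0,1}`. -/
noncomputable def thetaHat (L : ℕ) (A : MPS L) (s : ℕ) (hs : s ≤ L) (n : ℕ)
    (V : Matrix (Fin 2 × Fin (A.D s)) (Fin n) ℂ) (i : Fin n) :
    (Fin (L - s + 1) → Fin 2) → ℂ :=
  fun y => ∑ β, star (V (y ⟨0, Nat.succ_pos _⟩, β) i) *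
    A.theta s hs β (fun k => y ⟨(k : ℕ) + 1, by have := k.isLt; omega⟩)

namespace MPS
variable {L : ℕ} (m : MPS L)

lemma pref_congr {x y : ℕ → Fin 2} (n : ℕ) (h : ∀ k < n, x k = y k) :
    m.pref x n = m.pref y n := by
  induction n with
  | zero => rfl
  | succ n ih =>
    show m.pref x n * m.A n (x n) = m.pref y n * m.A n (y n)
    rw [ih (fun k hk => h k (by omega)), h n (by omega)]

lemma chunk_congr {x y : ℕ → Fin 2} (s n : ℕ) (h : ∀ k, s ≤ k → k < s + n → x k = y k) :
    m.chunk x s n = m.chunk y s n := by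
  induction n with
  | zero => rfl
  | succ n ih =>
    show m.chunk x s n * m.A (s + n) (x (s + n)) = m.chunk y s n * m.A (s + n) (y (s + n))
    rw [ih (fun k h1 h2 => h k h1 (by omega)), h (s + n) (by omega) (by omega)]

lemma pref_split (x : ℕ → Fin 2) (a b : ℕ) :
    m.pref x (a + b) = m.pref x a * m.chunk x a b := by
  induction b with
  | zero => exact (Matrix.mul_one _).symm
  | succ b ih =>
    show m.pref x (a + b) * m.A (a + b) (x (a + b)) = _
    rw [ih]
    show _ = m.pref x a * (m.chunk x a b * m.A (a + b) (x (a + b)))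
    rw [Matrix.mul_assoc]

lemma extendTup_snoc_lt {n : ℕ} (x : Fin n → Fin 2) (b : Fin 2) (k : ℕ) (hk : k < n) :
    extendTup (fun i => Fin.snoc (α := fun _ => Fin 2) x b i) k = extendTup x k := by
  have h1 : k < n + 1 := by omega
  simp only [extendTup, dif_pos hk, dif_pos h1]
  have : (⟨k, h1⟩ : Fin (n + 1)) = Fin.castSucc ⟨k, hk⟩ := rfl
  rw [this, Fin.snoc_castSucc]

lemma extendTup_snoc_last {n : ℕ} (x : Fin n → Fin 2) (b : Fin 2) :
    extendTup (fun i => Fin.snoc (α := fun _ => Fin 2) x b i) n = b := by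
  simp only [extendTup, dif_pos (Nat.lt_succ_self n)]
  have : (⟨n, Nat.lt_succ_self n⟩ : Fin (n + 1)) = Fin.last n := rfl
  rw [this, Fin.snoc_last]

lemma pref_gram (k : ℕ) (hLCF : ∀ s < k, m.LCF s) :
    ∑ x : Fin k → Fin 2, (m.pref (extendTup x) k)ᴴ * (m.pref (extendTup x) k) = 1 := by
  induction k with
  | zero =>
    rw [Finset.univ_unique, Finset.sum_singleton]
    show (1 : Matrix (Fin (m.D 0)) (Fin (m.D 0)) ℂ)ᴴ * 1 = 1
    simp
  | succ k ih =>
    have key : ∀ (b : Fin 2) (z : Fin k → Fin 2),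
        m.pref (extendTup (fun i => Fin.snoc (α := fun _ => Fin 2) z b i)) (k + 1)
          = m.pref (extendTup z) k * m.A k b := by
      intro b z
      show m.pref (extendTup (fun i => Fin.snoc (α := fun _ => Fin 2) z b i)) k
            * m.A k (extendTup (fun i => Fin.snoc (α := fun _ => Fin 2) z b i) k) = _
      rw [pref_congr m k (fun j hj => extendTup_snoc_lt z b j hj), extendTup_snoc_last]
    rw [← Equiv.sum_comp (Fin.snocEquiv (fun _ => Fin 2)), Fintype.sum_prod_type]
    have step : ∀ b : Fin 2, ∑ z : Fin k → Fin 2,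
        (m.pref (extendTup ((Fin.snocEquiv (fun _ => Fin 2)) (b, z))) (k+1))ᴴ
          * (m.pref (extendTup ((Fin.snocEquiv (fun _ => Fin 2)) (b, z))) (k+1))
        = (m.A k b)ᴴ * m.A k b := by
      intro b
      have : ∀ z : Fin k → Fin 2,
          (m.pref (extendTup ((Fin.snocEquiv (fun _ => Fin 2)) (b, z))) (k+1))ᴴ
            * (m.pref (extendTup ((Fin.snocEquiv (fun _ => Fin 2)) (b, z))) (k+1))
          = (m.A k b)ᴴ * ((m.pref (extendTup z) k)ᴴ * (m.pref (extendTup z) k)) * m.A k b := by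
        intro z
        rw [show extendTup ((Fin.snocEquiv (fun _ => Fin 2)) (b, z))
              = extendTup (fun i => Fin.snoc (α := fun _ => Fin 2) z b i) from rfl, key b z,
            conjTranspose_mul]
        rw [Matrix.mul_assoc, Matrix.mul_assoc, Matrix.mul_assoc]
      rw [Finset.sum_congr rfl (fun z _ => this z)]
      rw [← Matrix.sum_mul, ← Matrix.mul_sum, ih (fun s hs => hLCF s (by omega)),
        Matrix.mul_one]
    rw [Finset.sum_congr rfl (fun b _ => step b), Fin.sum_univ_two]
    exact hLCF k (by omega)

lemma extendTupFrom_snoc_lt (s : ℕ) {t : ℕ} (z : Fin t → Fin 2) (b : Fin 2) (k : ℕ)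
    (h1 : s ≤ k) (h2 : k < s + t) :
    extendTupFrom s (fun i => Fin.snoc (α := fun _ => Fin 2) z b i) k
      = extendTupFrom s z k := by
  have hk : k - s < t := by omega
  have hk1 : k - s < t + 1 := by omega
  simp only [extendTupFrom, dif_pos hk, dif_pos hk1]
  have : (⟨k - s, hk1⟩ : Fin (t + 1)) = Fin.castSucc ⟨k - s, hk⟩ := rfl
  rw [this, Fin.snoc_castSucc]

lemma extendTupFrom_snoc_last (s : ℕ) {t : ℕ} (z : Fin t → Fin 2) (b : Fin 2) :
    extendTupFrom s (fun i => Fin.snoc (α := fun _ => Fin 2) z b i) (s + t) = b := by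
  have h : s + t - s = t := by omega
  have hk1 : s + t - s < t + 1 := by omega
  simp only [extendTupFrom, dif_pos hk1]
  have : (⟨s + t - s, hk1⟩ : Fin (t + 1)) = Fin.last t := Fin.ext (by simp [h])
  rw [this, Fin.snoc_last]

lemma chunk_gram (s t : ℕ) (hRCF : ∀ k, s ≤ k → k < s + t → m.RCF k) :
    ∑ y : Fin t → Fin 2,
      (m.chunk (extendTupFrom s y) s t) * (m.chunk (extendTupFrom s y) s t)ᴴ = 1 := by
  induction t with
  | zero =>
    rw [Finset.univ_unique, Finset.sum_singleton]
    show (1 : Matrix (Fin (m.D s)) (Fin (m.D s)) ℂ)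
        * (1 : Matrix (Fin (m.D s)) (Fin (m.D s)) ℂ)ᴴ = 1
    simp
  | succ t ih =>
    have key : ∀ (b : Fin 2) (z : Fin t → Fin 2),
        m.chunk (extendTupFrom s (fun i => Fin.snoc (α := fun _ => Fin 2) z b i)) s (t + 1)
          = m.chunk (extendTupFrom s z) s t * m.A (s + t) b := by
      intro b z
      show m.chunk (extendTupFrom s (fun i => Fin.snoc (α := fun _ => Fin 2) z b i)) s t
            * m.A (s + t) (extendTupFrom s (fun i => Fin.snoc (α := fun _ => Fin 2) z b i) (s + t)) = _
      rw [chunk_congr m s t (fun j hj1 hj2 => extendTupFrom_snoc_lt s z b j hj1 hj2),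
        extendTupFrom_snoc_last]
    rw [← Equiv.sum_comp (Fin.snocEquiv (fun _ => Fin 2)), Fintype.sum_prod_type,
      Finset.sum_comm]
    have step : ∀ z : Fin t → Fin 2, ∑ b : Fin 2,
        (m.chunk (extendTupFrom s ((Fin.snocEquiv (fun _ => Fin 2)) (b, z))) s (t+1))
          * (m.chunk (extendTupFrom s ((Fin.snocEquiv (fun _ => Fin 2)) (b, z))) s (t+1))ᴴ
        = (m.chunk (extendTupFrom s z) s t) * (m.chunk (extendTupFrom s z) s t)ᴴ := by
      intro z
      have : ∀ b : Fin 2,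
          (m.chunk (extendTupFrom s ((Fin.snocEquiv (fun _ => Fin 2)) (b, z))) s (t+1))
            * (m.chunk (extendTupFrom s ((Fin.snocEquiv (fun _ => Fin 2)) (b, z))) s (t+1))ᴴ
          = (m.chunk (extendTupFrom s z) s t)
              * (m.A (s + t) b * (m.A (s + t) b)ᴴ)
              * (m.chunk (extendTupFrom s z) s t)ᴴ := by
        intro b
        rw [show extendTupFrom s ((Fin.snocEquiv (fun _ => Fin 2)) (b, z))
              = extendTupFrom s (fun i => Fin.snoc (α := fun _ => Fin 2) z b i) from rfl,
          key b z, conjTranspose_mul]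
        rw [Matrix.mul_assoc, Matrix.mul_assoc, Matrix.mul_assoc]
      rw [Finset.sum_congr rfl (fun b _ => this b), ← Matrix.sum_mul, ← Matrix.mul_sum]
      have hr : ∑ b : Fin 2, m.A (s + t) b * (m.A (s + t) b)ᴴ = 1 := by
        rw [Fin.sum_univ_two]; exact hRCF (s + t) (by omega) (by omega)
      rw [hr, Matrix.mul_one]
    rw [Finset.sum_congr rfl (fun z _ => step z)]
    exact ih (fun k h1 h2 => hRCF k h1 (by omega))

lemma sum_card_one {k : ℕ} (hk : k = 1) (f : Fin k → ℂ) (i : Fin k) : ∑ c, f c = f i := by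
  subst hk
  rw [Fin.sum_univ_one]
  exact congrArg f (Subsingleton.elim _ _)

lemma phi_gram (k : ℕ) (hLCF : ∀ s < k, m.LCF s) (α α' : Fin (m.D k)) :
    ∑ x : Fin k → Fin 2, star (m.phi k α' x) * m.phi k α x
      = if α = α' then 1 else 0 := by
  have h := congrFun (congrFun (m.pref_gram k hLCF) α') α
  rw [Matrix.sum_apply, Matrix.one_apply] at h
  rw [show (if α = α' then (1:ℂ) else 0) = if α' = α then 1 else 0 by simp [eq_comm], ← h]
  refine Finset.sum_congr rfl (fun x _ => ?_)
  rw [Matrix.mul_apply]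
  rw [sum_card_one m.D_zero _ ⟨0, by rw [m.D_zero]; exact Nat.one_pos⟩]
  rfl

lemma theta_gram (s : ℕ) (hs : s ≤ L) (hRCF : ∀ k, s ≤ k → k < L → m.RCF k)
    (β β' : Fin (m.D s)) :
    ∑ y : Fin (L - s) → Fin 2, m.theta s hs β y * star (m.theta s hs β' y)
      = if β = β' then 1 else 0 := by
  have h := congrFun (congrFun
    (m.chunk_gram s (L - s) (fun k h1 h2 => hRCF k h1 (by omega))) β) β'
  rw [Matrix.sum_apply, Matrix.one_apply] at h
  rw [← h]
  refine Finset.sum_congr rfl (fun y _ => ?_)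
  rw [Matrix.mul_apply]
  have hcard : m.D (s + (L - s)) = 1 := by rw [Nat.add_sub_cancel' hs, m.D_last]
  rw [sum_card_one hcard _ ⟨0, by rw [hcard]; exact Nat.one_pos⟩]
  rfl

end MPS

lemma phiHat_orth (L : ℕ) (A : MPS L) (m : ℕ) (hLCF : ∀ s < m, A.LCF s)
    (n : ℕ) (U : Matrix (Fin (A.D m)) (Fin n) ℂ) (hU : Uᴴ * U = 1) (i j : Fin n) :
    ∑ x : Fin m → Fin 2, star (phiHat L A m n U j x) * phiHat L A m n U i x =
      if i = j then 1 else 0 := by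
  simp only [phiHat, star_sum, star_mul']
  calc ∑ x : Fin m → Fin 2, (∑ α', star (U α' j) * star (A.phi m α' x))
        * (∑ α, U α i * A.phi m α x)
      = ∑ x : Fin m → Fin 2, ∑ α', ∑ α,
          (star (U α' j) * U α i) * (star (A.phi m α' x) * A.phi m α x) := by
        refine Finset.sum_congr rfl fun x _ => ?_
        rw [Finset.sum_mul_sum]
        exact Finset.sum_congr rfl fun _ _ => Finset.sum_congr rfl fun _ _ => by ring
    _ = ∑ α', ∑ α, (star (U α' j) * U α i)
          * ∑ x : Fin m → Fin 2, star (A.phi m α' x) * A.phi m α x := by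
        rw [Finset.sum_comm]
        refine Finset.sum_congr rfl fun α' _ => ?_
        rw [Finset.sum_comm]
        exact Finset.sum_congr rfl fun α _ => (Finset.mul_sum _ _ _).symm
    _ = ∑ α', ∑ α, (star (U α' j) * U α i) * (if α = α' then 1 else 0) := by
        exact Finset.sum_congr rfl fun α' _ => Finset.sum_congr rfl fun α _ => by
          rw [A.phi_gram m hLCF α α']
    _ = ∑ α', star (U α' j) * U α' i := by
        simp [mul_ite, mul_one, mul_zero]
    _ = (Uᴴ * U) j i := by
        rw [Matrix.mul_apply]
        exact Finset.sum_congr rfl fun α _ => rfl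
    _ = if i = j then 1 else 0 := by
        rw [hU, Matrix.one_apply]
        simp [eq_comm]

lemma thetaHat_eval (L : ℕ) (A : MPS L) (s : ℕ) (hs : s ≤ L) (n : ℕ)
    (V : Matrix (Fin 2 × Fin (A.D s)) (Fin n) ℂ) (i : Fin n)
    (b : Fin 2) (z : Fin (L - s) → Fin 2) :
    thetaHat L A s hs n V i ((Fin.consEquiv (fun _ => Fin 2)) (b, z))
      = ∑ β, star (V (b, β) i) * A.theta s hs β z := by
  simp only [thetaHat]
  refine Finset.sum_congr rfl fun β _ => ?_
  have h0 : (Fin.consEquiv (fun _ => Fin 2)) (b, z) ⟨0, Nat.succ_pos _⟩ = b :=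
    rfl
  have h1 : (fun k : Fin (L - s) => (Fin.consEquiv (fun _ => Fin 2)) (b, z)
      ⟨(k : ℕ) + 1, by have := k.isLt; omega⟩) = z := by
    funext k
    exact Fin.cons_succ (α := fun _ => Fin 2) b z k
  rw [h0, h1]

lemma thetaHat_orth (L : ℕ) (A : MPS L) (s : ℕ) (hs : s ≤ L)
    (hRCF : ∀ k, s ≤ k → k < L → A.RCF k)
    (n : ℕ) (V : Matrix (Fin 2 × Fin (A.D s)) (Fin n) ℂ) (hV : Vᴴ * V = 1) (i j : Fin n) :
    ∑ y : Fin (L - s + 1) → Fin 2,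
        star (thetaHat L A s hs n V j y) * thetaHat L A s hs n V i y =
      if i = j then 1 else 0 := by
  rw [← Equiv.sum_comp (Fin.consEquiv (fun _ => Fin 2))
      (fun y => star (thetaHat L A s hs n V j y) * thetaHat L A s hs n V i y),
    Fintype.sum_prod_type]
  calc ∑ b : Fin 2, ∑ z : Fin (L - s) → Fin 2,
        star (thetaHat L A s hs n V j ((Fin.consEquiv (fun _ => Fin 2)) (b, z)))
          * thetaHat L A s hs n V i ((Fin.consEquiv (fun _ => Fin 2)) (b, z))
      = ∑ b : Fin 2, ∑ z : Fin (L - s) → Fin 2, ∑ β', ∑ β,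
          (star (V (b, β) i) * V (b, β') j)
            * (A.theta s hs β z * star (A.theta s hs β' z)) := by
        refine Finset.sum_congr rfl fun b _ => Finset.sum_congr rfl fun z _ => ?_
        rw [thetaHat_eval, thetaHat_eval, star_sum, Finset.sum_mul_sum]
        refine Finset.sum_congr rfl fun β' _ => Finset.sum_congr rfl fun β _ => ?_
        rw [star_mul', star_star]
        ring
    _ = ∑ b : Fin 2, ∑ β', ∑ β, (star (V (b, β) i) * V (b, β') j)
          * ∑ z : Fin (L - s) → Fin 2,
              A.theta s hs β z * star (A.theta s hs β' z) := by
        refine Finset.sum_congr rfl fun b _ => ?_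
        rw [Finset.sum_comm]
        refine Finset.sum_congr rfl fun β' _ => ?_
        rw [Finset.sum_comm]
        exact Finset.sum_congr rfl fun β _ => (Finset.mul_sum _ _ _).symm
    _ = ∑ b : Fin 2, ∑ β', ∑ β, (star (V (b, β) i) * V (b, β') j)
          * (if β = β' then 1 else 0) := by
        refine Finset.sum_congr rfl fun b _ => Finset.sum_congr rfl fun β' _ =>
          Finset.sum_congr rfl fun β _ => ?_
        rw [A.theta_gram s hs hRCF β β']
    _ = ∑ b : Fin 2, ∑ β', star (V (b, β') i) * V (b, β') j := by
        simp [mul_ite, mul_one, mul_zero]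
    _ = (Vᴴ * V) i j := by
        rw [Matrix.mul_apply, Fintype.sum_prod_type]
        exact Finset.sum_congr rfl fun b _ => Finset.sum_congr rfl fun β _ => rfl
    _ = if i = j then 1 else 0 := by rw [hV, Matrix.one_apply]

lemma fin_app_cast {L : ℕ} (x : Fin L → Fin 2) (a b : ℕ) (ha : a < L) (hb : b < L)
    (h : a = b) : x ⟨a, ha⟩ = x ⟨b, hb⟩ := by subst h; rfl

lemma MPS.pref_cast {L : ℕ} (m : MPS L) (x : ℕ → Fin 2) {n n' : ℕ} (h : n = n')
    (a : Fin (m.D 0)) (γ : Fin (m.D n)) (γ' : Fin (m.D n')) (hγ : (γ : ℕ) = (γ' : ℕ)) :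
    m.pref x n a γ = m.pref x n' a γ' := by
  subst h
  exact congrArg _ (Fin.ext hγ)

lemma main_decomp (L : ℕ) (A : MPS L) (m : ℕ) (hm : m < L)
    (n : ℕ) (U : Matrix (Fin (A.D m)) (Fin n) ℂ) (S : Fin n → ℝ)
    (V : Matrix (Fin 2 × Fin (A.D (m + 1))) (Fin n) ℂ)
    (hSVD : ∀ (x : Fin 2) (a : Fin (A.D m)) (b : Fin (A.D (m + 1))),
      A.A m x a b = (U * Matrix.diagonal (fun i => (S i : ℂ)) * Vᴴ) a (x, b))
    (x : Fin L → Fin 2) :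
    A.state x =
      ∑ i : Fin n, (S i : ℂ) *
        phiHat L A m n U i (fun k => x ⟨(k : ℕ), by have := k.isLt; omega⟩) *
        thetaHat L A (m + 1) hm n V i
          (fun k => x ⟨m + (k : ℕ), by have := k.isLt; omega⟩) := by
  set r := L - (m + 1) with hr
  have hL : m + 1 + r = L := by omega
  set xe := extendTup x with hxe
  have e0 : Fin (A.D 0) := ⟨0, by rw [A.D_zero]; exact Nat.one_pos⟩
  set xm := x ⟨m, hm⟩ with hxm
  have hcL : 0 < A.D (m + 1 + r) := by rw [hL, A.D_last]; exact Nat.one_pos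
  set cL : Fin (A.D (m + 1 + r)) := ⟨0, hcL⟩ with hcLdef
  set P : Fin (A.D m) → ℂ :=
    fun α => A.pref xe m ⟨0, by rw [A.D_zero]; exact Nat.one_pos⟩ α with hP
  set C : Fin (A.D (m + 1)) → ℂ := fun β => A.chunk xe (m + 1) r β cL with hC
  -- Step A
  have stepA : A.state x = ∑ β, (∑ α, P α * A.A m xm α β) * C β := by
    show A.pref xe L _ _ = _
    rw [A.pref_cast xe hL.symm _ _ cL rfl, A.pref_split xe (m + 1) r, Matrix.mul_apply]
    refine Finset.sum_congr rfl fun β _ => ?_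
    congr 1
    show (A.pref xe m * A.A m (xe m)) _ β = _
    rw [Matrix.mul_apply]
    have hxem : xe m = xm := by
      rw [hxe, hxm]; simp only [extendTup, dif_pos hm]
    rw [hxem]
  -- SVD entrywise
  have hA : ∀ (α : Fin (A.D m)) (β : Fin (A.D (m + 1))),
      A.A m xm α β = ∑ i, U α i * (S i : ℂ) * star (V (xm, β) i) := by
    intro α β
    rw [hSVD, Matrix.mul_apply]
    refine Finset.sum_congr rfl fun i _ => ?_
    rw [Matrix.mul_diagonal, Matrix.conjTranspose_apply]
  -- Step C
  have stepC : ∀ i, phiHat L A m n U i (fun k => x ⟨(k : ℕ), by have := k.isLt; omega⟩)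
      = ∑ α, U α i * P α := by
    intro i
    refine Finset.sum_congr rfl fun α _ => ?_
    congr 1
    show A.pref (extendTup (fun k : Fin m => x ⟨(k : ℕ), _⟩)) m _ α = _
    rw [A.pref_congr m (y := xe) (fun k hk => by
      simp only [extendTup, hxe, dif_pos hk, dif_pos (show k < L by omega)])]
  -- Step D
  have stepD : ∀ i, thetaHat L A (m + 1) hm n V i
      (fun k => x ⟨m + (k : ℕ), by have := k.isLt; omega⟩)
      = ∑ β, star (V (xm, β) i) * C β := by
    intro i
    refine Finset.sum_congr rfl fun β _ => ?_
    congr 1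
    show A.chunk (extendTupFrom (m + 1) _) (m + 1) (L - (m + 1)) β _ = _
    rw [A.chunk_congr (m + 1) (L - (m + 1)) (y := xe) (fun k h1 h2 => by
      have hkr : k - (m + 1) < L - (m + 1) := by omega
      have hkL : k < L := by omega
      simp only [extendTupFrom, extendTup, hxe, dif_pos hkr, dif_pos hkL]
      exact fin_app_cast x _ k _ hkL (by omega))]
  have hRHS : ∑ i : Fin n, (S i : ℂ) *
        phiHat L A m n U i (fun k => x ⟨(k : ℕ), by have := k.isLt; omega⟩) *
        thetaHat L A (m + 1) hm n V i
          (fun k => x ⟨m + (k : ℕ), by have := k.isLt; omega⟩)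
      = ∑ i : Fin n, (S i : ℂ) * (∑ α, U α i * P α) * (∑ β, star (V (xm, β) i) * C β) :=
    Finset.sum_congr rfl fun i _ => by rw [stepC i, stepD i]
  rw [stepA, hRHS]
  symm
  calc ∑ i, (S i : ℂ) * (∑ α, U α i * P α) * (∑ β, star (V (xm, β) i) * C β)
      = ∑ i, ∑ β, ∑ α, (S i : ℂ) * (U α i * P α) * (star (V (xm, β) i) * C β) := by
        refine Finset.sum_congr rfl fun i _ => ?_
        rw [Finset.mul_sum]
        refine Finset.sum_congr rfl fun β _ => ?_
        rw [Finset.mul_sum, Finset.sum_mul]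
    _ = ∑ β, ∑ i, ∑ α, (S i : ℂ) * (U α i * P α) * (star (V (xm, β) i) * C β) :=
        Finset.sum_comm
    _ = ∑ β, ∑ α, ∑ i, (S i : ℂ) * (U α i * P α) * (star (V (xm, β) i) * C β) :=
        Finset.sum_congr rfl fun β _ => Finset.sum_comm
    _ = ∑ β, (∑ α, P α * A.A m xm α β) * C β := by
        refine Finset.sum_congr rfl fun β _ => ?_
        rw [Finset.sum_mul]
        refine Finset.sum_congr rfl fun α _ => ?_
        rw [hA α β, Finset.mul_sum, Finset.sum_mul]
        refine Finset.sum_congr rfl fun i _ => ?_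
        ring


/-- Schmidt decomposition of a mixed-canonical matrix product state.
Here `m` is the 0-based index of the distinguished site (the site `m+1` in 1-based counting,
with matrices of size `r × c` where `r = D m`, `c = D (m+1)`): the MPS is left canonical at
sites `< m` and right canonical at sites `> m`.  Given a singular value decomposition
`[A_0 | A_1] = U S Vᴴ` of the `r × 2c` block matrix of the distinguished site (with
`n = min(r, 2c)`, `S` diagonal with nonnegative entries and `U† U = V† V = I`), the families
`φ̂^i = ∑_α U_{α,i} φ^α` and `θ̂^i = ∑_β ((V_0^*)_{β,i} |0⟩⊗θ^β + (V_1^*)_{β,i} |1⟩⊗θ^β)`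
are each orthonormal, and `ψ(A) = ∑_{i=1}^{n} S_{i,i} φ̂^i ⊗ θ̂^i`. -/
theorem mps_schmidt_decomposition (L : ℕ) (A : MPS L) (m : ℕ) (hm : m < L)
    (hLCF : ∀ s < m, A.LCF s) (hRCF : ∀ s, m + 1 ≤ s → s < L → A.RCF s)
    (n : ℕ) (hn : n = min (A.D m) (2 * A.D (m + 1)))
    (U : Matrix (Fin (A.D m)) (Fin n) ℂ)
    (S : Fin n → ℝ) (hS : ∀ i, 0 ≤ S i)
    (V : Matrix (Fin 2 × Fin (A.D (m + 1))) (Fin n) ℂ)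
    (hU : Uᴴ * U = 1) (hV : Vᴴ * V = 1)
    (hSVD : ∀ (x : Fin 2) (a : Fin (A.D m)) (b : Fin (A.D (m + 1))),
      A.A m x a b = (U * Matrix.diagonal (fun i => (S i : ℂ)) * Vᴴ) a (x, b)) :
    (∀ i j : Fin n,
        ∑ x : Fin m → Fin 2, star (phiHat L A m n U j x) * phiHat L A m n U i x =
          if i = j then 1 else 0) ∧
      (∀ i j : Fin n,
        ∑ y : Fin (L - (m + 1) + 1) → Fin 2,
            star (thetaHat L A (m + 1) hm n V j y) * thetaHat L A (m + 1) hm n V i y =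
          if i = j then 1 else 0) ∧
      ∀ x : Fin L → Fin 2,
        A.state x =
          ∑ i : Fin n, (S i : ℂ) *
            phiHat L A m n U i (fun k => x ⟨(k : ℕ), by have := k.isLt; omega⟩) *
            thetaHat L A (m + 1) hm n V i
              (fun k => x ⟨m + (k : ℕ), by have := k.isLt; omega⟩) := by
    refine ⟨fun i j => phiHat_orth L A m hLCF n U hU i j,
    fun i j => thetaHat_orth L A (m + 1) hm hRCF n V hV i j,
    fun x => main_decomp L A m hm n U S V hSVD x⟩
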